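/- arXiv:math/0312273 — 2 statements merged into one kernel-verified Lean document; each statement's English description precedes it below -/
import Mathlib

section
/- (Springer) Let φ be an anisotropic quadratic form over a field F of characteristic ≠ 2, and let X be the associated projective quadric. If X has a closed point x of odd degree [F(x):F], then φ is isotropic over F, a contradiction; equivalently, an anisotropic quadratic form remains anisotropic over every finite field extension of odd degree. -/
open TensorProduct

/-- The hyperbolic form `⟨1,-1⟩ ⊥ ... ⊥ ⟨1,-1⟩` (`k` hyperbolic planes). -/
noncomputable def hypForm (F : Type*) [Field F] (k : ℕ) : QuadraticForm F (Fin (2*k) → F) :=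
  QuadraticMap.weightedSumSquares F (fun i : Fin (2*k) => (-1 : F) ^ (i : ℕ))

/-- Witt equivalence of two quadratic forms over `F`: they become isometric after adding
suitable numbers of hyperbolic planes. -/
def WittEquiv {F : Type*} [Field F] {V W : Type*} [AddCommGroup V] [Module F V]
    [AddCommGroup W] [Module F W] (φ : QuadraticForm F V) (ψ : QuadraticForm F W) : Prop :=
  ∃ k l : ℕ, (φ.prod (hypForm F k)).Equivalent (ψ.prod (hypForm F l))

/-- An orthogonal sum of scaled `n`-fold Pfister forms
`c 1 • ⟪⟪a 1 1, …, a 1 n⟫⟫ ⊥ … ⊥ c k • ⟪⟪a k 1, …, a k n⟫⟫`, realized as the diagonal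
quadratic form whose entries, indexed by a pair `(j, s)` with `s ⊆ {1,…,n}`, are
`c j * ∏_{i ∈ s} (-(a j i))`. -/
noncomputable def pfisterScaledSum {F : Type*} [Field F] {k n : ℕ}
    (c : Fin k → F) (a : Fin k → Fin n → F) :
    QuadraticForm F ((Fin k × Finset (Fin n)) → F) :=
  QuadraticMap.weightedSumSquares F
    (fun p : Fin k × Finset (Fin n) => c p.1 * ∏ i ∈ p.2, (-(a p.1 i)))

/-- The Witt class of `φ` lies in the `n`-th power `I(F)^n` of the fundamental ideal of the
Witt ring: equivalently, `φ` is Witt equivalent to an orthogonal sum of quadratic forms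
`c_j • ⟪⟪a_{j1}, …, a_{jn}⟫⟫`, each a nonzero scalar multiple of an `n`-fold Pfister form
(such sums additively generate `I(F)^n`). -/
def MemPowFundIdeal {F : Type*} [Field F] (n : ℕ) {V : Type*} [AddCommGroup V] [Module F V]
    (φ : QuadraticForm F V) : Prop :=
  ∃ (k : ℕ) (c : Fin k → F) (a : Fin k → Fin n → F),
    (∀ j, c j ≠ 0) ∧ (∀ j i, a j i ≠ 0) ∧ WittEquiv φ (pfisterScaledSum c a)

/-- The splitting pattern of `φ`: the set of natural numbers `m` such that, over some field
extension `E/F`, the anisotropic part of `φ_E` has dimension `m`. -/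
def splittingPattern {F : Type u} [Field F] [Invertible (2 : F)] {V : Type u} [AddCommGroup V]
    [Module F V] (φ : QuadraticForm F V) : Set ℕ :=
  {m | ∃ (E : Type u) (_ : Field E) (_ : Algebra F E) (l : ℕ)
        (ψ : QuadraticForm E (Fin m → E)), ψ.Anisotropic ∧
          (φ.baseChange E).Equivalent (ψ.prod (hypForm E l))}

/-!
Via the tower `F ⊆ F(α) ⊆ E` and induction on `[E : F]` it suffices to treat `F(α) ≅ F[X]/(p)`
with `p` irreducible of odd degree `n`, by induction on `n`. An isotropic vector over `F[X]/(p)`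
lifts to `w ∈ F[X] ⊗ V` of degree `d < n` with `p ∣ φ(w)`. As `φ` is anisotropic, the top
coefficient of `φ(w)` is `φ` of the top coefficient of `w`, so `deg φ(w) = 2d` and `φ(w) = p h`
with `deg h = 2d - n` odd and smaller than `n`. An irreducible factor `q` of `h` of odd degree is
covered by the induction hypothesis, which forces `q ∣ w`; then `w / q` has the same properties and
smaller degree, and this descent ends only when `p ∣ w`, i.e. when the vector was zero.
-/

open Polynomial

universe u

theorem QuadraticMap.Anisotropic.comp_injective {R M N P : Type*} [CommSemiring R]
    [AddCommMonoid M] [AddCommMonoid N] [AddCommMonoid P] [Module R M] [Module R N] [Module R P]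
    {Q : QuadraticMap R N P} (hQ : Q.Anisotropic) {f : M →ₗ[R] N} (hf : Function.Injective f) :
    (Q.comp f).Anisotropic :=
  fun _ hx => hf ((hQ _ hx).trans (map_zero f).symm)

theorem Polynomial.exists_monic_irreducible_odd_natDegree_dvd {F : Type*} [Field F] {f : F[X]}
    (hf : Odd f.natDegree) :
    ∃ q : F[X], q.Monic ∧ Irreducible q ∧ Odd q.natDegree ∧ q ∣ f := by
  induction f using WfDvdMonoid.induction_on_irreducible with
  | zero => simp at hf
  | unit u hu => simp [natDegree_eq_zero_of_isUnit hu] at hf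
  | mul a q ha hq ih =>
    rw [natDegree_mul hq.ne_zero ha] at hf
    by_cases hqodd : Odd q.natDegree
    · classical
      refine ⟨normalize q, monic_normalize hq.ne_zero,
        (normalize_associated q).symm.irreducible hq, ?_,
        normalize_dvd_iff.mpr (dvd_mul_right q a)⟩
      rwa [natDegree_eq_of_degree_eq degree_normalize]
    · obtain ⟨r, hr, hri, hro, hra⟩ :=
        ih <| (Nat.odd_add'.mp hf).mpr (Nat.not_odd_iff_even.mp hqodd)
      exact ⟨r, hr, hri, hro, hra.mul_left q⟩

abbrev invertibleTwoOfAlgebra (F A : Type*) [CommRing F] [CommRing A] [Algebra F A]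
    [Invertible (2 : F)] : Invertible (2 : A) :=
  (Invertible.map (algebraMap F A) 2).copy 2 (map_ofNat _ _).symm

section TensorCoeff

open Finset

variable {F V : Type*} [Field F] [AddCommGroup V] [Module F V]

variable (F V) in
noncomputable def tensorCoeff : F[X] ⊗[F] V ≃ₗ[F] ℕ →₀ V :=
  (PolynomialModule.polynomialTensorProductLEquivPolynomialModule F V).restrictScalars F ≪≫ₗ
    PolynomialModule.coeffLinearEquiv F (S := F)

@[simp]
theorem tensorCoeff_tmul (g : F[X]) (v : V) (n : ℕ) :
    tensorCoeff F V (g ⊗ₜ v) n = g.coeff n • v := by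
  simp [tensorCoeff, PolynomialModule.polynomialTensorProductLEquivPolynomialModule,
    PolynomialModule.lsingle]

noncomputable def tensorNatDegree (w : F[X] ⊗[F] V) : ℕ := (tensorCoeff F V w).support.sup id

theorem tensorCoeff_eq_zero_of_tensorNatDegree_lt {w : F[X] ⊗[F] V} {i : ℕ}
    (hi : tensorNatDegree w < i) : tensorCoeff F V w i = 0 :=
  Finsupp.notMem_support_iff.mp fun h => hi.not_ge (le_sup (f := id) h)

theorem tensorCoeff_tensorNatDegree_ne_zero {w : F[X] ⊗[F] V} (hw : w ≠ 0) :
    tensorCoeff F V w (tensorNatDegree w) ≠ 0 := by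
  obtain ⟨i, hi, hsup⟩ := exists_mem_eq_sup _
    (Finsupp.support_nonempty_iff.mpr ((tensorCoeff F V).map_ne_zero_iff.mpr hw)) id
  rw [tensorNatDegree, hsup]
  exact Finsupp.mem_support_iff.mp hi

theorem tensorNatDegree_lt {w : F[X] ⊗[F] V} {n : ℕ} (hn : 0 < n)
    (h : ∀ i, n ≤ i → tensorCoeff F V w i = 0) : tensorNatDegree w < n :=
  (Finset.sup_lt_iff hn).mpr fun i hi => by
    by_contra! hni
    exact Finsupp.mem_support_iff.mp hi (h i hni)

theorem tensorNatDegree_rTensor_modByMonicHom_lt {p : F[X]} (hp : p.Monic)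
    (hp0 : 0 < p.natDegree) (v : AdjoinRoot p ⊗[F] V) :
    tensorNatDegree ((AdjoinRoot.modByMonicHom hp).rTensor V v) < p.natDegree := by
  refine tensorNatDegree_lt hp0 fun i hi => ?_
  induction v using TensorProduct.induction_on with
  | zero => simp
  | add x y hx hy => simp [hx, hy]
  | tmul a v =>
    obtain ⟨g, rfl⟩ := AdjoinRoot.mk_surjective a
    rw [LinearMap.rTensor_tmul, tensorCoeff_tmul, AdjoinRoot.modByMonicHom_mk,
      coeff_eq_zero_of_degree_lt, zero_smul]
    exact (degree_modByMonic_lt g hp).trans_le (degree_le_natDegree.trans (by exact_mod_cast hi))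

theorem rTensor_mkₐ_eq_zero_iff (q : F[X]) (w : F[X] ⊗[F] V) :
    (AdjoinRoot.mkₐ q).toLinearMap.rTensor V w = 0 ↔ ∃ w', q • w' = w := by
  have hexact : Function.Exact (LinearMap.mulLeft F q) (AdjoinRoot.mkₐ q).toLinearMap :=
    fun g => by
      rw [AlgHom.toLinearMap_apply, AdjoinRoot.coe_mkₐ, AdjoinRoot.mk_eq_zero]
      simp [dvd_def, eq_comm]
  have hsmul (w' : F[X] ⊗[F] V) : (LinearMap.mulLeft F q).rTensor V w' = q • w' := by
    induction w' using TensorProduct.induction_on with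
    | zero => simp
    | add x y hx hy => simp [hx, hy]
    | tmul g v => simp [smul_tmul']
  simp [rTensor_exact V hexact AdjoinRoot.mk_surjective w, hsmul]

theorem LinearMap.BilinForm.coeff_baseChange_polynomial (β : LinearMap.BilinForm F V)
    (x y : F[X] ⊗[F] V) (m : ℕ) :
    (β.baseChange F[X] x y).coeff m
      = ∑ ij ∈ antidiagonal m, β (tensorCoeff F V x ij.1) (tensorCoeff F V y ij.2) := by
  induction x using TensorProduct.induction_on with
  | zero => simp
  | add x₁ x₂ h₁ h₂ => simp [h₁, h₂, sum_add_distrib]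
  | tmul g v =>
    induction y using TensorProduct.induction_on with
    | zero => simp
    | add y₁ y₂ h₁ h₂ => simp [h₁, h₂, mul_add, sum_add_distrib]
    | tmul g' v' =>
      simp only [LinearMap.BilinForm.baseChange_tmul, tensorCoeff_tmul, map_smul,
        LinearMap.smul_apply, coeff_smul, coeff_mul, smul_eq_mul, mul_sum]
      exact sum_congr rfl fun _ _ => by ring

end TensorCoeff

theorem LinearMap.BilinForm.baseChange_rTensor {F V A B : Type*} [Field F] [AddCommGroup V]
    [Module F V] [CommRing A] [CommRing B] [Algebra F A] [Algebra F B]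
    (β : LinearMap.BilinForm F V) (f : A →ₐ[F] B) (x y : A ⊗[F] V) :
    β.baseChange B (f.toLinearMap.rTensor V x) (f.toLinearMap.rTensor V y)
      = f (β.baseChange A x y) := by
  induction x using TensorProduct.induction_on with
  | zero => simp
  | add x₁ x₂ h₁ h₂ => simp only [map_add, LinearMap.add_apply, h₁, h₂]
  | tmul a v =>
    induction y using TensorProduct.induction_on with
    | zero => simp
    | add y₁ y₂ h₁ h₂ => simp only [map_add, h₁, h₂]
    | tmul a' v' => simp

namespace QuadraticForm

open Finset

variable {F V : Type*} [Field F] [Invertible (2 : F)] [AddCommGroup V] [Module F V]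
  (φ : QuadraticForm F V)

theorem baseChange_rTensor {A B : Type*} [CommRing A] [CommRing B] [Algebra F A] [Algebra F B]
    (f : A →ₐ[F] B) (x : A ⊗[F] V) :
    φ.baseChange B (f.toLinearMap.rTensor V x) = f (φ.baseChange A x) := by
  let := invertibleTwoOfAlgebra F A
  let := invertibleTwoOfAlgebra F B
  rw [← QuadraticMap.associated_eq_self_apply B, ← QuadraticMap.associated_eq_self_apply A,
    associated_baseChange, associated_baseChange, LinearMap.BilinForm.baseChange_rTensor]

theorem baseChange_self : φ.baseChange F = φ.comp (TensorProduct.lid F V).toLinearMap :=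
  baseChange_ext fun v => by simp

theorem baseChange_eq_comp_cancelBaseChange (K E : Type*) [Field K] [Field E] [Algebra F K]
    [Algebra K E] [Algebra F E] [IsScalarTower F K E] [Invertible (2 : K)] :
    φ.baseChange E = ((φ.baseChange K).baseChange E).comp
      (AlgebraTensorModule.cancelBaseChange F K E E V).symm.toLinearMap :=
  baseChange_ext fun v => by simp

theorem coeff_baseChange_polynomial (w : F[X] ⊗[F] V) (m : ℕ) :
    (φ.baseChange F[X] w).coeff m
      = ∑ ij ∈ antidiagonal m,
          QuadraticMap.associated φ (tensorCoeff F V w ij.1) (tensorCoeff F V w ij.2) := by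
  let := invertibleTwoOfAlgebra F F[X]
  rw [← QuadraticMap.associated_eq_self_apply F[X], associated_baseChange,
    LinearMap.BilinForm.coeff_baseChange_polynomial]

theorem associated_tensorCoeff_eq_zero (w : F[X] ⊗[F] V) {i j : ℕ}
    (h : tensorNatDegree w < i ∨ tensorNatDegree w < j) :
    QuadraticMap.associated φ (tensorCoeff F V w i) (tensorCoeff F V w j) = 0 := by
  rcases h with h | h <;> simp [tensorCoeff_eq_zero_of_tensorNatDegree_lt h]

theorem coeff_baseChange_polynomial_eq_zero (w : F[X] ⊗[F] V) {m : ℕ}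
    (hm : 2 * tensorNatDegree w < m) : (φ.baseChange F[X] w).coeff m = 0 := by
  rw [coeff_baseChange_polynomial]
  refine sum_eq_zero fun ij hij => φ.associated_tensorCoeff_eq_zero w ?_
  rw [HasAntidiagonal.mem_antidiagonal] at hij
  omega

theorem coeff_baseChange_polynomial_two_mul (w : F[X] ⊗[F] V) :
    (φ.baseChange F[X] w).coeff (2 * tensorNatDegree w)
      = φ (tensorCoeff F V w (tensorNatDegree w)) := by
  rw [coeff_baseChange_polynomial, sum_eq_single_of_mem (tensorNatDegree w, tensorNatDegree w)
    (HasAntidiagonal.mem_antidiagonal.mpr (two_mul _).symm), QuadraticMap.associated_eq_self_apply]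
  intro ij hij hne
  refine φ.associated_tensorCoeff_eq_zero w ?_
  rw [HasAntidiagonal.mem_antidiagonal] at hij
  by_contra!
  exact hne (Prod.ext (by omega) (by omega))

variable {φ}

theorem exists_smul_eq_of_dvd_baseChange {q : F[X]}
    (hq : (φ.baseChange (AdjoinRoot q)).Anisotropic) {w : F[X] ⊗[F] V}
    (h : q ∣ φ.baseChange F[X] w) : ∃ w', q • w' = w :=
  (rTensor_mkₐ_eq_zero_iff q w).mp <| hq _ <| by
    rw [baseChange_rTensor, AdjoinRoot.coe_mkₐ, AdjoinRoot.mk_eq_zero.mpr h]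

end QuadraticForm

namespace QuadraticMap.Anisotropic

variable {F V : Type*} [Field F] [Invertible (2 : F)] [AddCommGroup V] [Module F V]
  {φ : QuadraticForm F V}

theorem baseChange_of_injective {A B : Type*} [CommRing A] [CommRing B] [Algebra F A]
    [Algebra F B] (f : A →ₐ[F] B) (hf : Function.Injective f)
    (h : (φ.baseChange B).Anisotropic) : (φ.baseChange A).Anisotropic := fun x hx =>
  Module.Flat.rTensor_preserves_injective_linearMap f.toLinearMap hf <| by
    rw [map_zero]
    exact h _ (by rw [QuadraticForm.baseChange_rTensor, hx, map_zero])

theorem baseChange_self (hφ : φ.Anisotropic) : (φ.baseChange F).Anisotropic := by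
  rw [QuadraticForm.baseChange_self]
  exact hφ.comp_injective (LinearEquiv.injective _)

theorem baseChange_polynomial (hφ : φ.Anisotropic) : (φ.baseChange F[X]).Anisotropic := by
  intro w hw
  by_contra hw0
  apply tensorCoeff_tensorNatDegree_ne_zero hw0 (hφ _ _)
  rw [← QuadraticForm.coeff_baseChange_polynomial_two_mul, hw, coeff_zero]

theorem natDegree_baseChange_polynomial (hφ : φ.Anisotropic) (w : F[X] ⊗[F] V) :
    (φ.baseChange F[X] w).natDegree = 2 * tensorNatDegree w := by
  rcases eq_or_ne w 0 with rfl | hw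
  · simp [tensorNatDegree]
  refine natDegree_eq_of_le_of_coeff_ne_zero (natDegree_le_iff_coeff_eq_zero.mpr
    fun m hm => φ.coeff_baseChange_polynomial_eq_zero w hm) ?_
  rw [QuadraticForm.coeff_baseChange_polynomial_two_mul]
  exact fun h => tensorCoeff_tensorNatDegree_ne_zero hw (hφ _ h)

theorem exists_smul_eq_of_dvd (hφ : φ.Anisotropic) {p : F[X]} (hirr : Irreducible p)
    (hodd : Odd p.natDegree)
    (ih : ∀ q : F[X], q.Monic → Irreducible q → Odd q.natDegree →
      q.natDegree < p.natDegree → (φ.baseChange (AdjoinRoot q)).Anisotropic)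
    (w : F[X] ⊗[F] V) (hdeg : tensorNatDegree w < p.natDegree)
    (hdvd : p ∣ φ.baseChange F[X] w) : ∃ w', p • w' = w := by
  induction hd : tensorNatDegree w using Nat.strong_induction_on generalizing w with
  | _ d ihd =>
  rcases eq_or_ne w 0 with rfl | hw
  · exact ⟨0, smul_zero p⟩
  obtain ⟨h, hh⟩ := hdvd
  have hΦ0 : φ.baseChange F[X] w ≠ 0 := fun h0 => hw (hφ.baseChange_polynomial w h0)
  have hh0 : h ≠ 0 := right_ne_zero_of_mul (hh ▸ hΦ0)
  have hdeg_ph := hφ.natDegree_baseChange_polynomial w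
  rw [hh, natDegree_mul hirr.ne_zero hh0, hd] at hdeg_ph
  obtain ⟨q, hqm, hqi, hqo, hqh⟩ := exists_monic_irreducible_odd_natDegree_dvd (f := h) <| by
    rcases hodd with ⟨k, hk⟩
    exact ⟨d - k - 1, by omega⟩
  have hqp : q.natDegree < p.natDegree := (natDegree_le_of_dvd hqh hh0).trans_lt (by omega)
  obtain ⟨w₁, rfl⟩ := QuadraticForm.exists_smul_eq_of_dvd_baseChange (ih q hqm hqi hqo hqp)
    (hh ▸ hqh.mul_left p)
  have hΦ : φ.baseChange F[X] (q • w₁) = q * q * φ.baseChange F[X] w₁ :=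
    QuadraticMap.map_smul _ _ _
  have hΦ₁ : φ.baseChange F[X] w₁ ≠ 0 := fun h0 => hΦ0 (by rw [hΦ, h0, mul_zero])
  have hp₁ : p ∣ φ.baseChange F[X] w₁ := by
    have hpq : ¬ p ∣ q := fun hpq => (natDegree_le_of_dvd hpq hqi.ne_zero).not_gt hqp
    have hpqq : ¬ p ∣ q * q := fun h' => (hirr.prime.dvd_mul.mp h').elim hpq hpq
    exact (hirr.prime.dvd_mul.mp (hΦ ▸ hh ▸ dvd_mul_right p h)).resolve_left hpqq
  have hd₁ : tensorNatDegree w₁ < d := by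
    have := congrArg natDegree hΦ
    rw [natDegree_mul (mul_ne_zero hqi.ne_zero hqi.ne_zero) hΦ₁,
      natDegree_mul hqi.ne_zero hqi.ne_zero, hφ.natDegree_baseChange_polynomial,
      hφ.natDegree_baseChange_polynomial, hd] at this
    have := hqo.pos
    omega
  obtain ⟨w₂, rfl⟩ := ihd _ hd₁ w₁ (hd₁.trans (hd ▸ hdeg)) hp₁ rfl
  exact ⟨q • w₂, smul_comm p q w₂⟩

theorem baseChange_adjoinRoot (hφ : φ.Anisotropic) {p : F[X]} (hp : p.Monic)
    (hirr : Irreducible p) (hodd : Odd p.natDegree) :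
    (φ.baseChange (AdjoinRoot p)).Anisotropic := by
  induction hn : p.natDegree using Nat.strong_induction_on generalizing p with
  | _ n ih =>
  intro v hv
  set w := (AdjoinRoot.modByMonicHom hp).rTensor V v
  have hsection :
      (AdjoinRoot.mkₐ p).toLinearMap ∘ₗ AdjoinRoot.modByMonicHom hp = LinearMap.id :=
    LinearMap.ext (AdjoinRoot.mk_leftInverse hp)
  have hwv : (AdjoinRoot.mkₐ p).toLinearMap.rTensor V w = v := by
    rw [← LinearMap.rTensor_comp_apply, hsection, LinearMap.rTensor_id_apply]
  have hdvd : p ∣ φ.baseChange F[X] w := by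
    rw [← AdjoinRoot.mk_eq_zero, ← AdjoinRoot.coe_mkₐ, ← QuadraticForm.baseChange_rTensor,
      hwv, hv]
  rw [← hwv, rTensor_mkₐ_eq_zero_iff]
  exact hφ.exists_smul_eq_of_dvd hirr hodd
    (fun q hq hqi hqo hlt => ih _ (hn ▸ hlt) hq hqi hqo rfl) w
    (tensorNatDegree_rTensor_modByMonicHom_lt hp hodd.pos v) hdvd

end QuadraticMap.Anisotropic

open IntermediateField Module in
theorem QuadraticMap.Anisotropic.baseChange_of_odd_finrank {F E V : Type u} [Field F]
    [Invertible (2 : F)] [Field E] [Algebra F E] [FiniteDimensional F E] [AddCommGroup V]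
    [Module F V] {φ : QuadraticForm F V} (hφ : φ.Anisotropic) (hodd : Odd (finrank F E)) :
    (φ.baseChange E).Anisotropic := by
  induction hn : finrank F E using Nat.strong_induction_on generalizing F E V with
  | _ n ih =>
  by_cases hsurj : Function.Surjective (algebraMap F E)
  · let e := AlgEquiv.ofBijective (Algebra.ofId F E) ⟨(algebraMap F E).injective, hsurj⟩
    exact hφ.baseChange_self.baseChange_of_injective e.symm.toAlgHom e.symm.injective
  obtain ⟨α, hα⟩ := not_forall.mp hsurj
  have hint := IsIntegral.of_finite F α
  have hmul := finrank_mul_finrank F F⟮α⟯ E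
  have hoddK : Odd (finrank F F⟮α⟯) := (Nat.odd_mul.mp (hmul ▸ hodd)).1
  have hK : (φ.baseChange F⟮α⟯).Anisotropic :=
    (hφ.baseChange_adjoinRoot (minpoly.monic hint) (minpoly.irreducible hint)
      (adjoin.finrank hint ▸ hoddK)).baseChange_of_injective
      (adjoinRootEquivAdjoin F hint).symm.toAlgHom (AlgEquiv.injective _)
  have hK1 : finrank F F⟮α⟯ ≠ 1 := fun h1 => hα <| by
    have := mem_adjoin_simple_self F α
    rwa [finrank_eq_one_iff.mp h1, mem_bot] at this
  have hlt : finrank F⟮α⟯ E < n := by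
    rw [← hn, ← hmul]
    exact (Nat.lt_mul_iff_one_lt_left finrank_pos).mpr (by have := hoddK.pos; omega)
  let := invertibleTwoOfAlgebra F F⟮α⟯
  rw [QuadraticForm.baseChange_eq_comp_cancelBaseChange φ F⟮α⟯ E]
  exact (ih _ hlt hK (Nat.odd_mul.mp (hmul ▸ hodd)).2 rfl).comp_injective
    (LinearEquiv.injective _)

/-- (Springer.) An anisotropic quadratic form over `F` (char `≠ 2`) remains anisotropic over
every finite field extension of odd degree. -/
theorem springer_odd_degree {F : Type} [Field F] [Invertible (2 : F)] {E : Type} [Field E]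
    [Algebra F E] [FiniteDimensional F E] (hodd : Odd (Module.finrank F E))
    {V : Type} [AddCommGroup V] [Module F V] (φ : QuadraticForm F V) (hani : φ.Anisotropic) :
    (φ.baseChange E).Anisotropic :=
  hani.baseChange_of_odd_finrank hodd
end

section
/- For every n ≥ 1 and every i ∈ {1, ..., n+1}, there exists a field F of characteristic ≠ 2 and an anisotropic quadratic form φ over F with [φ] ∈ I(F)^n and dim(φ) = 2^{n+1} - 2^i. Such a form is given over a rational function field by ⟨⟨u_1,...,u_{i-1}⟩⟩ ⊗ (⟨⟨v_1,...,v_{n+1-i}⟩⟩' ⊥ -⟨⟨w_1,...,w_{n+1-i}⟩⟩') in the variables u, v, w. -/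
/-!
Over `K = ℚ(t₀, …, t_{2n-1})` take the two `n`-fold Pfister forms `⟪⟪-u, -v⟫⟫` and `⟪⟪-u, -w⟫⟫`,
which share the `r = i - 1` variables `u`; the class of their difference lies in `I^n`. Its
diagonal entries are signed squarefree monomials. Those involving only the `u`'s occur once with
each sign, so they split off `2^r` hyperbolic planes; the remaining `2^(n+1) - 2^i` entries are
distinct monomials. A diagonal form with distinct squarefree monomial entries is anisotropic by
Springer's theorem, applied one variable at a time: over `K(X)`, `q₀ ⊥ X q₁` is anisotropic when
`q₀` and `q₁` are, because the values of `q₀` have even degree and those of `X q₁` odd degree.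
-/

open TensorProduct

namespace QuadraticMap

section Diagonal

variable {R : Type*} [CommSemiring R] {ι κ : Type*} [Fintype ι] [Fintype κ]

theorem Equivalent.anisotropic {M₁ M₂ P : Type*} [AddCommMonoid M₁] [AddCommMonoid M₂]
    [AddCommMonoid P] [Module R M₁] [Module R M₂] [Module R P] {Q₁ : QuadraticMap R M₁ P}
    {Q₂ : QuadraticMap R M₂ P} (h : Q₁.Equivalent Q₂) (h₂ : Q₂.Anisotropic) :
    Q₁.Anisotropic := by
  obtain ⟨e⟩ := h
  intro x hx
  exact (map_eq_zero_iff e e.injective).1 (h₂ _ (by rwa [e.map_app]))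

theorem equivalent_prod_of_unique {M₁ M₂ P : Type*} [AddCommMonoid M₁] [AddCommMonoid M₂]
    [AddCommMonoid P] [Module R M₁] [Module R M₂] [Module R P] [Unique M₂]
    (Q₁ : QuadraticMap R M₁ P) (Q₂ : QuadraticMap R M₂ P) : Q₁.Equivalent (Q₁.prod Q₂) :=
  ⟨{ toLinearEquiv := LinearEquiv.prodUnique.symm
     map_app' x := by
       simp [LinearEquiv.prodUnique, Subsingleton.elim (default : M₂) 0] }⟩

theorem weightedSumSquares_equivalent_of_equiv {w : ι → R} {w' : κ → R} (e : ι ≃ κ)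
    (h : ∀ i, w' (e i) = w i) :
    (weightedSumSquares R w).Equivalent (weightedSumSquares R w') :=
  ⟨{ toLinearEquiv := LinearEquiv.funCongrLeft R R e.symm
     map_app' x := by
       simp only [weightedSumSquares_apply]
       exact (Fintype.sum_equiv e _ _ fun i => by simp [h]).symm }⟩

theorem weightedSumSquares_sumElim_equivalent (w₁ : ι → R) (w₂ : κ → R) :
    (weightedSumSquares R (Sum.elim w₁ w₂)).Equivalent
      ((weightedSumSquares R w₁).prod (weightedSumSquares R w₂)) :=
  ⟨{ toLinearEquiv := LinearEquiv.sumArrowLequivProdArrow ι κ R R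
     map_app' x := by
       simp only [prod_apply, weightedSumSquares_apply, Fintype.sum_sum_type]
       rfl }⟩

theorem weightedSumSquares_equivalent_prod_subtype (w : ι → R) (P : ι → Prop)
    [DecidablePred P] :
    (weightedSumSquares R w).Equivalent ((weightedSumSquares R fun i : {i // ¬P i} => w i).prod
      (weightedSumSquares R fun i : {i // P i} => w i)) :=
  (weightedSumSquares_equivalent_of_equiv ((Equiv.sumComm _ _).trans (Equiv.sumCompl P))
    (w := Sum.elim _ _) (by rintro (i | i) <;> rfl)).symm.trans
    (weightedSumSquares_sumElim_equivalent _ _)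

theorem weightedSumSquares_prod_equivalent_pi (w : ι × κ → R) :
    (weightedSumSquares R w).Equivalent
      (pi fun i => weightedSumSquares R fun j => w (i, j)) :=
  ⟨{ toLinearEquiv := LinearEquiv.curry R R ι κ
     map_app' x := by
       simp only [pi_apply, weightedSumSquares_apply, Fintype.sum_prod_type]
       rfl }⟩

end Diagonal

/-- The isometry `x ↦ y` has `y₀ + y₁ = x₀ + x₁` and `c (y₀ - y₁) = x₀ - x₁`. -/
theorem weightedSumSquares_neg_one_pow_equivalent_const_mul {F : Type*} [Field F]
    (h2 : (2 : F) ≠ 0) {c : F} (hc : c ≠ 0) :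
    (weightedSumSquares F fun j : Fin 2 => (-1 : F) ^ (j : ℕ)).Equivalent
      (weightedSumSquares F fun j : Fin 2 => c * (-1 : F) ^ (j : ℕ)) := by
  set A : Matrix (Fin 2) (Fin 2) F := !![(1 + c) / 2, (1 - c) / 2; (1 - c) / 2, (1 + c) / 2]
  set B : Matrix (Fin 2) (Fin 2) F :=
    !![(1 + c⁻¹) / 2, (1 - c⁻¹) / 2; (1 - c⁻¹) / 2, (1 + c⁻¹) / 2]
  have hAB : A * B = 1 := by
    ext i j
    fin_cases i <;> fin_cases j <;> simp [A, B, Matrix.mul_apply] <;> field_simp <;> ring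
  have hBA : B * A = 1 := by
    ext i j
    fin_cases i <;> fin_cases j <;> simp [A, B, Matrix.mul_apply] <;> field_simp <;> ring
  refine ⟨{ toLinearEquiv := Matrix.toLin'OfInv hAB hBA, map_app' := fun x => ?_ }⟩
  simp [weightedSumSquares_apply, Matrix.toLin'OfInv, B, Matrix.vecHead, Matrix.vecTail]
  field_simp
  ring

end QuadraticMap

open QuadraticMap

theorem hypForm_equivalent_weightedSumSquares {F : Type*} [Field F] (h2 : (2 : F) ≠ 0)
    {τ : Type*} [Fintype τ] (m : τ → F) (hm : ∀ t, m t ≠ 0) :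
    (hypForm F (Fintype.card τ)).Equivalent
      (weightedSumSquares F fun q : τ × Fin 2 => m q.1 * (-1 : F) ^ (q.2 : ℕ)) := by
  let e : τ × Fin 2 ≃ Fin (2 * Fintype.card τ) :=
    ((Fintype.equivFin τ).prodCongr (Equiv.refl _)).trans
      (finProdFinEquiv.trans (finCongr (mul_comm _ _)))
  refine (weightedSumSquares_equivalent_of_equiv e
    (w := fun q : τ × Fin 2 => (-1 : F) ^ (q.2 : ℕ)) fun q => ?_).symm.trans ?_
  · simp [e, finProdFinEquiv, pow_add, pow_mul]
  · exact (weightedSumSquares_prod_equivalent_pi fun q : τ × Fin 2 => (-1 : F) ^ (q.2 : ℕ)).trans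
      ((Equivalent.pi fun t => weightedSumSquares_neg_one_pow_equivalent_const_mul h2 (hm t)).trans
        (weightedSumSquares_prod_equivalent_pi fun q : τ × Fin 2 =>
          m q.1 * (-1 : F) ^ (q.2 : ℕ)).symm)

theorem exists_anisotropic_wittEquiv_weightedSumSquares {F T : Type*} [Field F] [Fintype T]
    (W : T → F) (P : T → Prop) [DecidablePred P] {k D : ℕ}
    (hD : Fintype.card {t // ¬P t} = D)
    (hani : (weightedSumSquares F fun t : {t // ¬P t} => W t).Anisotropic)
    (hhyp : (hypForm F k).Equivalent (weightedSumSquares F fun t : {t // P t} => W t)) :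
    ∃ φ : QuadraticForm F (Fin D → F), φ.Anisotropic ∧ WittEquiv φ (weightedSumSquares F W) := by
  let e : Fin D ≃ {t // ¬P t} := (Fintype.equivFinOfCardEq hD).symm
  have hφ : (weightedSumSquares F fun i => W (e i)).Equivalent
      (weightedSumSquares F fun t : {t // ¬P t} => W t) :=
    weightedSumSquares_equivalent_of_equiv e fun _ => rfl
  refine ⟨_, hφ.anisotropic hani, k, 0, ?_⟩
  have : Unique (Fin (2 * 0) → F) := inferInstanceAs (Unique (Fin 0 → F))
  exact (hφ.prod hhyp).trans ((weightedSumSquares_equivalent_prod_subtype W P).symm.trans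
    (equivalent_prod_of_unique _ _))

section Springer

open Polynomial

variable {K : Type*} [Field K] {ι : Type*} [Fintype ι]

theorem Polynomial.weightedSumSquares_C_ne_zero_and_even_natDegree {w : ι → K}
    (hw : (weightedSumSquares K w).Anisotropic) {p : ι → K[X]} (hp : p ≠ 0) :
    weightedSumSquares K[X] (fun j => C (w j)) p ≠ 0 ∧
      Even (weightedSumSquares K[X] (fun j => C (w j)) p).natDegree := by
  classical
  obtain ⟨j₀, hj₀⟩ : ∃ j, p j ≠ 0 := Function.ne_iff.1 hp
  obtain ⟨j₁, hj₁, hmax⟩ := Finset.exists_max_image {j | p j ≠ 0} (fun j => (p j).natDegree)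
    ⟨j₀, by simpa using hj₀⟩
  set d := (p j₁).natDegree
  have hle : ∀ j, (p j).natDegree ≤ d := fun j => by
    by_cases h : p j = 0
    · simp [h]
    · exact hmax j (by simpa using h)
  have hdeg : (weightedSumSquares K[X] (fun j => C (w j)) p).natDegree ≤ 2 * d := by
    rw [weightedSumSquares_apply]
    refine natDegree_sum_le_of_forall_le _ _ fun j _ => ?_
    rw [smul_eq_mul, ← _root_.sq]
    exact (natDegree_C_mul_le _ _).trans (natDegree_pow_le_of_le 2 (hle j))
  have hcoeff : (weightedSumSquares K[X] (fun j => C (w j)) p).coeff (2 * d) =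
      weightedSumSquares K w (fun j => (p j).coeff d) := by
    simp only [weightedSumSquares_apply, finsetSum_coeff, smul_eq_mul, coeff_C_mul, ← _root_.sq,
      coeff_pow_of_natDegree_le (hle _)]
  have hne : (weightedSumSquares K[X] (fun j => C (w j)) p).coeff (2 * d) ≠ 0 := by
    rw [hcoeff]
    intro h
    exact leadingCoeff_ne_zero.2 (by simpa using hj₁) (congrFun (hw _ h) j₁)
  refine ⟨fun h => hne (by rw [h, coeff_zero]), ⟨d, ?_⟩⟩
  rw [natDegree_eq_of_le_of_coeff_ne_zero hdeg hne]
  ring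

theorem Polynomial.weightedSumSquares_C_mul_ite_X_anisotropic {w : ι → K} (P : ι → Prop)
    [DecidablePred P] (h₀ : (weightedSumSquares K fun j : {j // ¬P j} => w j).Anisotropic)
    (h₁ : (weightedSumSquares K fun j : {j // P j} => w j).Anisotropic) :
    (weightedSumSquares K[X] fun j => C (w j) * if P j then X else 1).Anisotropic := by
  intro p hp
  set p₀ : {j // ¬P j} → K[X] := fun j => p j
  set p₁ : {j // P j} → K[X] := fun j => p j
  set f := weightedSumSquares K[X] (fun j : {j // ¬P j} => C (w j)) p₀
  set g := weightedSumSquares K[X] (fun j : {j // P j} => C (w j)) p₁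
  have hfg : f + X * g = 0 := by
    rw [← hp, weightedSumSquares_apply, ← Fintype.sum_subtype_add_sum_subtype P, add_comm]
    simp only [f, g, p₀, p₁, weightedSumSquares_apply, smul_eq_mul, Finset.mul_sum]
    refine congrArg₂ (· + ·) (Finset.sum_congr rfl fun j _ => ?_)
      (Finset.sum_congr rfl fun j _ => ?_)
    · rw [if_pos j.2]; ring
    · rw [if_neg j.2, mul_one]
  -- `f` has even degree and `X * g` odd degree, so they cannot cancel
  have hp₁ : p₁ = 0 := by
    by_contra hp₁
    obtain ⟨hg, hg_even⟩ : g ≠ 0 ∧ Even g.natDegree :=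
      weightedSumSquares_C_ne_zero_and_even_natDegree h₁ hp₁
    by_cases hp₀ : p₀ = 0
    · rw [show f = 0 by simp only [f, hp₀, map_zero], zero_add] at hfg
      exact hg ((mul_eq_zero.1 hfg).resolve_left X_ne_zero)
    · obtain ⟨-, hf_even⟩ : f ≠ 0 ∧ Even f.natDegree :=
        weightedSumSquares_C_ne_zero_and_even_natDegree h₀ hp₀
      rw [eq_neg_of_add_eq_zero_left hfg, natDegree_neg, natDegree_X_mul hg] at hf_even
      exact Nat.not_even_iff_odd.2 hg_even.add_one hf_even
  have hp₀ : p₀ = 0 := by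
    by_contra hp₀
    refine (weightedSumSquares_C_ne_zero_and_even_natDegree h₀ hp₀).1 (?_ : f = 0)
    rwa [show g = 0 by simp only [g, hp₁, map_zero], mul_zero, add_zero] at hfg
  funext j
  by_cases hj : P j
  · exact congrFun hp₁ ⟨j, hj⟩
  · exact congrFun hp₀ ⟨j, hj⟩

theorem weightedSumSquares_algebraMap_anisotropic {R L : Type*} [CommRing R] [IsDomain R]
    [Field L] [Algebra R L] [IsFractionRing R L] {w : ι → R}
    (hw : (weightedSumSquares R w).Anisotropic) :
    (weightedSumSquares L fun j => algebraMap R L (w j)).Anisotropic := by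
  intro x hx
  obtain ⟨b, hb⟩ := IsLocalization.exist_integer_multiples_of_finite (nonZeroDivisors R) x
  choose p hp using hb
  have hb0 : algebraMap R L b ≠ 0 :=
    IsFractionRing.to_map_ne_zero_of_mem_nonZeroDivisors b.2
  have hp0 : p = 0 := by
    refine hw p (IsFractionRing.injective R L ?_)
    calc algebraMap R L (weightedSumSquares R w p)
        = algebraMap R L b ^ 2 * weightedSumSquares L (fun j => algebraMap R L (w j)) x := by
          simp only [weightedSumSquares_apply, map_sum, smul_eq_mul, map_mul, hp,
            Algebra.smul_def, Finset.mul_sum]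
          exact Finset.sum_congr rfl fun j _ => by ring
      _ = algebraMap R L 0 := by rw [hx, mul_zero, map_zero]
  funext j
  have hxj := hp j
  rw [hp0, Pi.zero_apply, map_zero, Algebra.smul_def] at hxj
  exact (mul_eq_zero.1 hxj.symm).resolve_left hb0

/-- Springer's theorem for `K(X)`, with `q₀ ⊥ X q₁` written as a single diagonal form. -/
theorem RatFunc.weightedSumSquares_mul_ite_X_anisotropic {w : ι → K} (P : ι → Prop)
    [DecidablePred P] (h₀ : (weightedSumSquares K fun j : {j // ¬P j} => w j).Anisotropic)
    (h₁ : (weightedSumSquares K fun j : {j // P j} => w j).Anisotropic) :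
    (weightedSumSquares (RatFunc K) fun j =>
      algebraMap K (RatFunc K) (w j) * if P j then RatFunc.X else 1).Anisotropic := by
  convert weightedSumSquares_algebraMap_anisotropic (L := RatFunc K)
    (Polynomial.weightedSumSquares_C_mul_ite_X_anisotropic P h₀ h₁) using 3 with j
  split_ifs <;> simp [RatFunc.algebraMap_C, RatFunc.algebraMap_X]

end Springer

/-- `ℚ(t₀, …, t_{N-1})`, adjoining one variable at a time. -/
noncomputable abbrev ratFuncTower : ℕ → Σ K : Type, Field K
  | 0 => ⟨ℚ, inferInstance⟩
  | N + 1 => letI := (ratFuncTower N).2; ⟨RatFunc (ratFuncTower N).1, inferInstance⟩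

abbrev RatFuncTower (N : ℕ) : Type := (ratFuncTower N).1

noncomputable instance (N : ℕ) : Field (RatFuncTower N) := (ratFuncTower N).2

namespace RatFuncTower

instance charZero : ∀ N, CharZero (RatFuncTower N)
  | 0 => inferInstanceAs (CharZero ℚ)
  | N + 1 => letI := charZero N; inferInstanceAs (CharZero (RatFunc (RatFuncTower N)))

/-- The variable `t_m`; it is `1` when `m ≥ N`, i.e. when `t_m` has not been adjoined yet. -/
noncomputable def var : (N : ℕ) → ℕ → RatFuncTower N
  | 0, _ => 1
  | N + 1, m => if m = N then RatFunc.X else algebraMap (RatFuncTower N) _ (var N m)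

theorem var_ne_zero : ∀ (N m : ℕ), var N m ≠ 0
  | 0, _ => one_ne_zero
  | N + 1, m => by
    rw [var]
    split_ifs
    · exact RatFunc.X_ne_zero
    · exact (_root_.map_ne_zero _).2 (var_ne_zero N m)

noncomputable def monomial (N : ℕ) (S : Finset ℕ) : RatFuncTower N := ∏ m ∈ S, var N m

theorem monomial_succ (N : ℕ) (S : Finset ℕ) :
    monomial (N + 1) S = algebraMap (RatFuncTower N) (RatFuncTower (N + 1))
      (monomial N (S.erase N)) * if N ∈ S then RatFunc.X else 1 := by
  have hprod : ∏ m ∈ S.erase N, var (N + 1) m =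
      algebraMap (RatFuncTower N) (RatFuncTower (N + 1)) (monomial N (S.erase N)) := by
    rw [monomial, map_prod]
    exact Finset.prod_congr rfl fun m hm => by rw [var, if_neg (Finset.ne_of_mem_erase hm)]
  by_cases hN : N ∈ S
  · rw [if_pos hN, ← hprod, monomial, ← Finset.prod_erase_mul _ _ hN, var, if_pos rfl]
  · rw [if_neg hN, mul_one, ← hprod, Finset.erase_eq_of_notMem hN, monomial]

theorem anisotropic_monomial {ι : Type*} [Fintype ι] (N : ℕ) (ε : ι → ℚ) (hε : ∀ j, ε j ≠ 0)
    (s : ι → Finset ℕ) (hs : Function.Injective s) (hsN : ∀ j, s j ⊆ Finset.range N) :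
    (weightedSumSquares (RatFuncTower N) fun j =>
      (ε j : RatFuncTower N) * monomial N (s j)).Anisotropic := by
  induction N generalizing ι with
  | zero =>
    have : Subsingleton ι := ⟨fun a b => hs (by
      rw [Finset.subset_empty.1 (hsN a), Finset.subset_empty.1 (hsN b)])⟩
    intro x hx
    funext j
    rw [weightedSumSquares_apply, Fintype.sum_subsingleton _ j, smul_eq_mul,
      Finset.subset_empty.1 (hsN j), monomial, Finset.prod_empty, mul_one] at hx
    simpa [hε j] using hx
  | succ N ih =>
    have hsN' (j : ι) : (s j).erase N ⊆ Finset.range N := fun m hm => by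
      have := hsN j (Finset.mem_of_mem_erase hm)
      simp only [Finset.mem_range] at this ⊢
      exact lt_of_le_of_ne (Nat.lt_succ_iff.1 this) (Finset.ne_of_mem_erase hm)
    have hinj₀ : Function.Injective fun j : {j // N ∉ s j} => (s j).erase N := fun a b hab =>
      Subtype.ext <| hs <| by
        simpa only [Finset.erase_eq_of_notMem a.2, Finset.erase_eq_of_notMem b.2] using hab
    have h₀ := ih (fun j : {j // N ∉ s j} => ε j) (fun j => hε j) _ hinj₀ (fun j => hsN' j)
    have h₁ := ih (fun j : {j // N ∈ s j} => ε j) (fun j => hε j) (fun j => (s j).erase N)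
      (fun a b hab => Subtype.ext (hs (Finset.erase_injOn' N a.2 b.2 hab))) (fun j => hsN' j)
    convert RatFunc.weightedSumSquares_mul_ite_X_anisotropic
      (w := fun j => (ε j : RatFuncTower N) * monomial N ((s j).erase N)) _ h₀ h₁ using 3 with j
    rw [monomial_succ, map_mul, map_ratCast, mul_assoc]

/-- The `x`-th slot of the `j`-th Pfister form holds `t_(pfisterVarIndex n r j x)`: the shared
variables `u_x = t_x` for `x < r`, then `v_x = t_x` in the form `j = 0` and `w_x = t_(n+x)` in
the form `j = 1`. -/
def pfisterVarIndex (n r : ℕ) (j : Fin 2) (x : Fin n) : ℕ :=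
  if (x : ℕ) < r ∨ j = 0 then x else x + n

/-- The diagonal entries of `⟪⟪-u, -v⟫⟫ ⊥ -⟪⟪-u, -w⟫⟫`. -/
noncomputable def pfisterPairWeight (n r : ℕ) (p : Fin 2 × Finset (Fin n)) :
    RatFuncTower (2 * n) :=
  (-1) ^ (p.1 : ℕ) * ∏ x ∈ p.2, var (2 * n) (pfisterVarIndex n r p.1 x)

def lowVars (n r : ℕ) : Finset (Fin n) := {x | (x : ℕ) < r}

variable {n r : ℕ}

theorem pfisterVarIndex_injective (j : Fin 2) : Function.Injective (pfisterVarIndex n r j) := by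
  intro x y hxy
  have := x.2
  have := y.2
  simp only [pfisterVarIndex] at hxy
  split_ifs at hxy <;> omega

theorem pfisterVarIndex_lt (j : Fin 2) (x : Fin n) : pfisterVarIndex n r j x < 2 * n := by
  have := x.2
  simp only [pfisterVarIndex]
  split_ifs <;> omega

theorem image_pfisterVarIndex_injOn :
    Set.InjOn (fun p : Fin 2 × Finset (Fin n) => p.2.image (pfisterVarIndex n r p.1))
      {p | ¬p.2 ⊆ lowVars n r} := by
  rintro ⟨j, s⟩ hs ⟨j', s'⟩ - himage
  simp only at himage
  obtain ⟨x, hxs, hxr⟩ := Finset.not_subset.1 hs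
  obtain ⟨y, hys', hyx⟩ := Finset.mem_image.1
    (himage ▸ Finset.mem_image_of_mem (pfisterVarIndex n r j) hxs)
  have hj : j = j' := by
    simp only [lowVars, Finset.mem_filter, Finset.mem_univ, true_and, not_lt] at hxr
    have := x.2
    have := y.2
    simp only [pfisterVarIndex] at hyx
    split_ifs at hyx <;> omega
  subst hj
  exact Prod.ext rfl (Finset.image_injective (pfisterVarIndex_injective j) himage)

theorem pfisterPairWeight_eq_monomial (p : Fin 2 × Finset (Fin n)) :
    pfisterPairWeight n r p =
      (((-1) ^ (p.1 : ℕ) : ℚ) : RatFuncTower (2 * n)) *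
        monomial (2 * n) (p.2.image (pfisterVarIndex n r p.1)) := by
  rw [pfisterPairWeight, monomial,
    Finset.prod_image fun x _ y _ h => pfisterVarIndex_injective p.1 h]
  push_cast
  rfl

theorem anisotropic_pfisterPairWeight :
    (weightedSumSquares (RatFuncTower (2 * n)) fun p : {p : Fin 2 × Finset (Fin n) //
      ¬p.2 ⊆ lowVars n r} => pfisterPairWeight n r p).Anisotropic := by
  simp_rw [pfisterPairWeight_eq_monomial]
  refine anisotropic_monomial _ _ (fun _ => by simp) _ (fun p q h => Subtype.ext ?_)
    fun p => ?_
  · exact image_pfisterVarIndex_injOn p.2 q.2 h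
  · simpa [Finset.subset_iff] using fun x _ => pfisterVarIndex_lt p.1.1 x

theorem pfisterVarIndex_of_mem_lowVars (j : Fin 2) {x : Fin n} (hx : x ∈ lowVars n r) :
    pfisterVarIndex n r j x = x :=
  if_pos (Or.inl (by simpa [lowVars] using hx))

def subsetLowVarsEquiv (n r : ℕ) :
    {p : Fin 2 × Finset (Fin n) // p.2 ⊆ lowVars n r} ≃
      {s : Finset (Fin n) // s ⊆ lowVars n r} × Fin 2 :=
  (Equiv.subtypeEquiv (q := fun p => p.1 ⊆ lowVars n r) (Equiv.prodComm _ _)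
    fun _ => Iff.rfl).trans (Equiv.prodSubtypeFstEquivSubtypeProd (p := (· ⊆ lowVars n r)))

theorem card_subset_lowVars (hr : r ≤ n) :
    Fintype.card {s : Finset (Fin n) // s ⊆ lowVars n r} = 2 ^ r := by
  rw [Fintype.card_subtype, Finset.filter_subset_univ, Finset.card_powerset, lowVars,
    Fin.card_filter_val_lt, min_eq_right hr]

theorem card_not_subset_lowVars (hr : r ≤ n) :
    Fintype.card {p : Fin 2 × Finset (Fin n) // ¬p.2 ⊆ lowVars n r} =
      2 ^ (n + 1) - 2 ^ (r + 1) := by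
  rw [Fintype.card_subtype_compl, Fintype.card_congr (subsetLowVarsEquiv n r), Fintype.card_prod,
    Fintype.card_prod, card_subset_lowVars hr, Fintype.card_finset, Fintype.card_fin,
    Fintype.card_fin, pow_succ, pow_succ, mul_comm 2]

theorem hypForm_equivalent_pfisterPairWeight (hr : r ≤ n) :
    (hypForm (RatFuncTower (2 * n)) (2 ^ r)).Equivalent
      (weightedSumSquares (RatFuncTower (2 * n)) fun p : {p : Fin 2 × Finset (Fin n) //
        p.2 ⊆ lowVars n r} => pfisterPairWeight n r p) := by
  rw [← card_subset_lowVars hr]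
  refine (hypForm_equivalent_weightedSumSquares two_ne_zero
    (fun s : {s : Finset (Fin n) // s ⊆ lowVars n r} => ∏ x ∈ s.1, var (2 * n) x)
    (fun s => Finset.prod_ne_zero_iff.2 fun x _ => var_ne_zero _ _)).trans
    (weightedSumSquares_equivalent_of_equiv (subsetLowVarsEquiv n r).symm fun q => ?_)
  obtain ⟨⟨s, hs⟩, j⟩ := q
  show pfisterPairWeight n r (j, s) = (∏ x ∈ s, var (2 * n) x) * (-1) ^ (j : ℕ)
  rw [pfisterPairWeight, mul_comm (_ ^ _)]
  congr 1
  exact Finset.prod_congr rfl fun x hx => by rw [pfisterVarIndex_of_mem_lowVars j (hs hx)]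

theorem pfisterScaledSum_eq_weightedSumSquares :
    pfisterScaledSum (fun j : Fin 2 => (-1 : RatFuncTower (2 * n)) ^ (j : ℕ))
      (fun j x => -var (2 * n) (pfisterVarIndex n r j x)) =
      weightedSumSquares _ (pfisterPairWeight n r) := by
  simp only [pfisterScaledSum, neg_neg]
  rfl

end RatFuncTower

open RatFuncTower

theorem exists_small_dim_general (n i : ℕ) (hi1 : 1 ≤ i) (hi2 : i ≤ n + 1) :
    ∃ (F : Type) (_ : Field F), (2 : F) ≠ 0 ∧
      ∃ φ : QuadraticForm F (Fin (2 ^ (n + 1) - 2 ^ i) → F),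
        φ.Anisotropic ∧ MemPowFundIdeal n φ := by
  obtain ⟨r, rfl⟩ : ∃ r, i = r + 1 := ⟨i - 1, by omega⟩
  have hr : r ≤ n := by omega
  obtain ⟨φ, hφ, hψ⟩ := exists_anisotropic_wittEquiv_weightedSumSquares (pfisterPairWeight n r)
    (fun p => p.2 ⊆ lowVars n r) (card_not_subset_lowVars hr) anisotropic_pfisterPairWeight
    (hypForm_equivalent_pfisterPairWeight hr)
  refine ⟨RatFuncTower (2 * n), inferInstance, two_ne_zero, φ, hφ, 2,
    fun j => (-1) ^ (j : ℕ), fun j x => -var (2 * n) (pfisterVarIndex n r j x),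
    fun j => by simp, fun j x => neg_ne_zero.2 (var_ne_zero _ _), ?_⟩
  rwa [pfisterScaledSum_eq_weightedSumSquares]

/-- For every `n ≥ 1` and every `i ∈ {1, …, n+1}` there is a field `F` of characteristic `≠ 2`
and an anisotropic quadratic form `φ` over `F` with `[φ] ∈ I(F)^n` and
`dim φ = 2^(n+1) - 2^i` (for instance `⟪⟪u⟫⟫ ⊗ (⟪⟪v⟫⟫' ⊥ -⟪⟪w⟫⟫')` over a rational
function field). -/
theorem exists_small_dim (n i : ℕ) (hn : 1 ≤ n) (hi1 : 1 ≤ i) (hi2 : i ≤ n + 1) :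
    ∃ (F : Type) (_ : Field F), (2 : F) ≠ 0 ∧
      ∃ φ : QuadraticForm F (Fin (2 ^ (n + 1) - 2 ^ i) → F),
        φ.Anisotropic ∧ MemPowFundIdeal n φ :=
  exists_small_dim_general n i hi1 hi2
end
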